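/- Let k ≥ 5 be an odd integer and ℓ = (k-1)/2. Let G be a 2-connected simple graph containing no cycle of length at least k, suppose the (ℓ-1)-disintegration H = H(G,ℓ-1) is non-empty, and let P = x₁x₂⋯x_m be a crossing H-path of G with the maximum number of vertices among all H-paths, where m ≥ k. If m ≥ k+1, then P has a unique minimal crossing pair (i,j), and it satisfies j - i - 1 = m - k + 1. If m = k, then every minimal crossing pair (i',j') of P satisfies j' - i' - 1 = 1. -/

import Mathlib

open SimpleGraph

variable {V : Type*}

/-- `x 1, …, x m` is a path in `G` (1-indexed): injective on `[1, m]`, with consecutive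
vertices adjacent. -/
def IsIndexedPath (G : SimpleGraph V) (x : ℕ → V) (m : ℕ) : Prop :=
  (∀ i j, 1 ≤ i → i ≤ m → 1 ≤ j → j ≤ m → x i = x j → i = j) ∧
  ∀ i, 1 ≤ i → i < m → G.Adj (x i) (x (i + 1))

/-- The vertex set of the indexed path `x 1, …, x m`. -/
def pathVerts (x : ℕ → V) (m : ℕ) : Set V := {v | ∃ i, 1 ≤ i ∧ i ≤ m ∧ x i = v}

/-- `N_P(v)`: the neighbours of `v` among the vertices of the path. -/
def pathNbrs (G : SimpleGraph V) (x : ℕ → V) (m : ℕ) (v : V) : Set V :=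
  {u | u ∈ pathVerts x m ∧ G.Adj v u}

/-- `N_P⁻(x₁)`: immediate predecessors on `P` of the path-neighbours of `x₁`. -/
def predNbrs (G : SimpleGraph V) (x : ℕ → V) (m : ℕ) : Set V :=
  {v | ∃ i, 2 ≤ i ∧ i ≤ m ∧ G.Adj (x 1) (x i) ∧ v = x (i - 1)}

/-- `N_P⁺(x_m)`: immediate successors on `P` of the path-neighbours of `x_m`. -/
def succNbrs (G : SimpleGraph V) (x : ℕ → V) (m : ℕ) : Set V :=
  {v | ∃ i, 1 ≤ i ∧ i < m ∧ G.Adj (x m) (x i) ∧ v = x (i + 1)}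

/-- `G` contains no cycle of length at least `k`, i.e. `c(G) < k`. -/
def NoCycleGE (G : SimpleGraph V) (k : ℕ) : Prop :=
  ∀ (v : V) (w : G.Walk v v), w.IsCycle → w.length < k

/-- `G` contains a cycle of length at least `L`. -/
def HasCycleGE (G : SimpleGraph V) (L : ℕ) : Prop :=
  ∃ (v : V) (w : G.Walk v v), w.IsCycle ∧ L ≤ w.length

/-- `G` is 2-connected: at least 3 vertices and deleting any single vertex leaves a
connected graph. -/
def TwoConnected (G : SimpleGraph V) [Fintype V] : Prop :=
  3 ≤ Fintype.card V ∧ ∀ v : V, (G.induce {u | u ≠ v}).Connected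

/-- The vertex set of the `α`-disintegration `H(G, α)` of `G`: the largest vertex set on
which the induced subgraph has minimum degree at least `α + 1`. -/
noncomputable def disint (G : SimpleGraph V) (α : ℕ) : Set V :=
  ⋃₀ {S : Set V | ∀ v ∈ S, α + 1 ≤ {u | u ∈ S ∧ G.Adj v u}.ncard}

/-- `N_s(G)`: the number of `s`-cliques of `G`. -/
noncomputable def cliqueCount (G : SimpleGraph V) (s : ℕ) : ℕ :=
  {S : Finset V | G.IsNClique s S}.ncard

/-- `h_s(n, k, a) = C(k - a, s) + (n - k + a) · C(a, s - 1)`. -/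
def hval (n k a s : ℕ) : ℕ :=
  Nat.choose (k - a) s + (n - k + a) * Nat.choose a (s - 1)

/-- The graph `H(n, k, a)` on `Fin n`: the first `a` vertices form the set `A`, the next
`k - 2a` vertices form `C`, and the remaining `n - k + a` vertices form `B`; `A ∪ C` is a
clique and every vertex of `A` is joined to every vertex of `B`. -/
def Hgraph (n k a : ℕ) : SimpleGraph (Fin n) :=
  SimpleGraph.fromRel fun i j =>
    (i.val < a ∧ k - a ≤ j.val) ∨ (i.val < k - a ∧ j.val < k - a)

/-- `G` is isomorphic to a subgraph of `H`. -/
def IsSubgraphOf {W : Type*} (G : SimpleGraph V) (H : SimpleGraph W) : Prop :=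
  ∃ f : V → W, Function.Injective f ∧ ∀ a b, G.Adj a b → H.Adj (f a) (f b)

/-- Every connected component of `H` is a star: there is an assignment of a "center" to
each vertex such that every edge joins the common center of its endpoints to a leaf. -/
def IsStarForest (H : SimpleGraph V) : Prop :=
  ∃ f : V → V, ∀ a b, H.Adj a b → (f a = a ∧ f b = a) ∨ (f a = b ∧ f b = b)

/-- `(i, j)` is a crossing pair of the indexed path `x 1, …, x m`. -/
def CrossPair (G : SimpleGraph V) (x : ℕ → V) (m i j : ℕ) : Prop :=
  1 ≤ i ∧ i < j ∧ j ≤ m ∧ G.Adj (x m) (x i) ∧ G.Adj (x 1) (x j)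

/-- `(i, j)` is a minimal crossing pair of the indexed path `x 1, …, x m`. -/
def MinCrossPair (G : SimpleGraph V) (x : ℕ → V) (m i j : ℕ) : Prop :=
  CrossPair G x m i j ∧
    ∀ h, i < h → h < j → ¬G.Adj (x 1) (x h) ∧ ¬G.Adj (x m) (x h)

/-- One application of the successor operation along the path to a set of vertices. -/
def succStep (x : ℕ → V) (m : ℕ) (S : Set V) : Set V :=
  {v | ∃ i, 1 ≤ i ∧ i < m ∧ x i ∈ S ∧ v = x (i + 1)}

/-- `N_P^{+i}(x_m)`: the `i`-fold iterated successor set of `N_P(x_m)` along the path. -/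
def iterNbrSucc (G : SimpleGraph V) (x : ℕ → V) (m i : ℕ) : Set V :=
  (succStep x m)^[i] (pathNbrs G x m (x m))
/-
Let `A` and `B` be the positions on `P` of the neighbours of `x₁` and of `x_m`. By maximality of
`P`, every neighbour of `x₁` or `x_m` inside `H` lies on `P`, so `|A|, |B| ≥ ℓ`. A crossing pair
`(i, j)` closes the cycle `x₁ ⋯ x_i x_m ⋯ x_j x₁` of length `m - (j - i - 1)`, hence
`j - i - 1 ≥ m - k + 1`; in particular no `t ∈ B` has `t + 1 ∈ A`. For a minimal crossing pair
the sets `A - 1`, `B` and the interior `{i + 1, …, j - 2}` are disjoint subsets of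
`{1, …, m - 1}`, which gives `j - i - 1 ≤ m - 2ℓ = m - k + 1`. So equality holds and the three
sets partition `{1, …, m - 1}`. When the gap is at least `2`, the position `i' + 1` of a second
minimal pair `(i', j')` can then only lie in the interior of the first one, so `i ≤ i'`, and by
symmetry the two pairs coincide.
-/

open Finset

open Classical in
noncomputable def pathNbrIndices (G : SimpleGraph V) (x : ℕ → V) (m : ℕ) (v : V) : Finset ℕ :=
  {t ∈ Icc 1 m | G.Adj v (x t)}

section GapCount

variable {A B : Finset ℕ} {m i j : ℕ}

theorem image_pred_union_union_Ioo_subset (hA : A ⊆ Icc 2 m) (hB : B ⊆ Icc 1 (m - 1))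
    (hj : j ≤ m) : A.image (· - 1) ∪ B ∪ Ioo i (j - 1) ⊆ Icc 1 (m - 1) := by
  intro t ht
  simp only [mem_union, mem_image, mem_Ioo, mem_Icc] at ht ⊢
  rcases ht with (⟨a, ha, rfl⟩ | ht) | ht
  · have := mem_Icc.1 (hA ha); omega
  · have := mem_Icc.1 (hB ht); omega
  · omega

theorem card_image_pred_union_union_Ioo (hA : 0 ∉ A) (hAB : ∀ t ∈ B, t + 1 ∉ A)
    (hgap : ∀ h, i < h → h < j → h ∉ A ∧ h ∉ B) :
    (A.image (· - 1) ∪ B ∪ Ioo i (j - 1)).card = A.card + B.card + (j - i - 2) := by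
  have hA' : ∀ a ∈ A, a - 1 + 1 = a := fun a ha => Nat.sub_add_cancel <|
    Nat.one_le_iff_ne_zero.2 fun h => hA (h ▸ ha)
  have hinj : Set.InjOn (· - 1) (A : Set ℕ) := fun a ha b hb hab => by
    have := hA' a ha
    have := hA' b hb
    simp only at hab
    omega
  have hdisj : Disjoint (A.image (· - 1)) B := by
    refine disjoint_left.2 ?_
    rintro _ hs htB
    obtain ⟨a, ha, rfl⟩ := mem_image.1 hs
    exact hAB _ htB ((hA' a ha).symm ▸ ha)
  have hdisj' : Disjoint (A.image (· - 1) ∪ B) (Ioo i (j - 1)) := by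
    refine disjoint_left.2 fun t ht hti => ?_
    obtain ⟨hit, htj⟩ := mem_Ioo.1 hti
    rcases mem_union.1 ht with hs | htB
    · obtain ⟨a, ha, rfl⟩ := mem_image.1 hs
      exact (hgap a (by omega) (by omega)).1 ha
    · exact (hgap t hit (by omega)).2 htB
  rw [card_union_of_disjoint hdisj', card_union_of_disjoint hdisj, card_image_of_injOn hinj,
    Nat.card_Ioo]
  omega

end GapCount

theorem pathVerts_reverse (x : ℕ → V) (m : ℕ) :
    pathVerts (fun t => x (m + 1 - t)) m = pathVerts x m := by
  ext v
  constructor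
  · rintro ⟨t, ht, htm, rfl⟩
    exact ⟨m + 1 - t, by omega, by omega, rfl⟩
  · rintro ⟨t, ht, htm, rfl⟩
    exact ⟨m + 1 - t, by omega, by omega, by simp only; congr 1; omega⟩

namespace IsIndexedPath

variable {G : SimpleGraph V} {x : ℕ → V} {m : ℕ}

theorem exists_walk (hP : IsIndexedPath G x m) {a b : ℕ} (ha : 1 ≤ a) (hab : a ≤ b) (hbm : b ≤ m) :
    ∃ w : G.Walk (x a) (x b),
      w.support = (List.range' a (b - a + 1)).map x ∧ w.length = b - a := by
  induction b, hab using Nat.le_induction with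
  | base => exact ⟨.nil, by simp, by simp⟩
  | succ b hab ih =>
    obtain ⟨w, hs, hl⟩ := ih (by omega)
    refine ⟨w.concat (hP.2 b (by omega) (by omega)), ?_, by simp [hl]; omega⟩
    rw [Walk.support_concat, hs]
    conv_rhs => rw [show b + 1 - a + 1 = b - a + 1 + 1 by omega, List.range'_1_concat,
      show a + (b - a + 1) = b + 1 by omega]
    simp

theorem isPath_of_support_eq_map (hP : IsIndexedPath G x m) {u v : V} {w : G.Walk u v}
    {l : List ℕ} (hw : w.support = l.map x) (hl : l.Nodup) (hlm : ∀ t ∈ l, 1 ≤ t ∧ t ≤ m) :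
    w.IsPath := by
  rw [Walk.isPath_def, hw]
  exact hl.map_on fun s hs t ht =>
    hP.1 s t (hlm s hs).1 (hlm s hs).2 (hlm t ht).1 (hlm t ht).2

theorem exists_isCycle_of_crossPair (hP : IsIndexedPath G x m) {i j : ℕ}
    (hc : CrossPair G x m i j) (h3 : 3 ≤ i + (m - j) + 1) :
    ∃ (u : V) (c : G.Walk u u), c.IsCycle ∧ c.length = i + (m - j) + 1 := by
  obtain ⟨hi, hij, hjm, hmi, h1j⟩ := hc
  obtain ⟨p, hps, hpl⟩ := hP.exists_walk (a := j) (b := m) (by omega) hjm le_rfl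
  obtain ⟨q, hqs, hql⟩ := hP.exists_walk (a := 1) (b := i) le_rfl hi (by omega)
  let r : G.Walk (x j) (x 1) := p.append (.cons hmi q.reverse)
  have hrl : r.length = i + (m - j) := by
    simp only [r, Walk.length_append, Walk.length_cons, Walk.length_reverse, hpl, hql]
    omega
  have hr : r.IsPath := by
    refine hP.isPath_of_support_eq_map
      (l := List.range' j (m - j + 1) ++ (List.range' 1 i).reverse) ?_ ?_ ?_
    · rw [Walk.support_append, Walk.support_cons, List.tail_cons, Walk.support_reverse, hps, hqs,
        List.map_append, List.map_reverse, show i - 1 + 1 = i by omega]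
    · refine List.nodup_append.2 ⟨List.nodup_range', List.nodup_reverse.2 List.nodup_range', ?_⟩
      simp only [List.mem_reverse, List.mem_range'_1]
      omega
    · simp only [List.mem_append, List.mem_reverse, List.mem_range'_1]
      omega
  refine ⟨x 1, .cons h1j r, (Walk.cons_isCycle_iff r h1j).2 ⟨hr, fun he => ?_⟩, by simp [hrl]⟩
  have := hr.length_eq_one_of_mem_edges (Sym2.eq_swap ▸ he)
  omega

theorem sub_lt_of_crossPair (hP : IsIndexedPath G x m) {k i j : ℕ} (hcyc : NoCycleGE G k)
    (hk : 3 ≤ k) (hc : CrossPair G x m i j) : m - (j - i - 1) < k := by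
  by_cases h3 : 3 ≤ i + (m - j) + 1
  · obtain ⟨u, c, hc, hl⟩ := hP.exists_isCycle_of_crossPair hc h3
    have := hcyc u c hc
    omega
  · omega

theorem reverse (hP : IsIndexedPath G x m) : IsIndexedPath G (fun t => x (m + 1 - t)) m := by
  refine ⟨fun s t hs hsm ht htm hst => ?_, fun t ht htm => ?_⟩
  · have := hP.1 _ _ (by omega) (by omega) (by omega) (by omega) hst
    omega
  · have := hP.2 (m - t) (by omega) (by omega)
    rw [show m - t + 1 = m + 1 - t by omega] at this
    simpa [show m + 1 - (t + 1) = m - t by omega] using this.symm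

theorem concat (hP : IsIndexedPath G x m) {u : V} (hu : u ∉ pathVerts x m)
    (hadj : G.Adj (x m) u) : IsIndexedPath G (fun t => if t ≤ m then x t else u) (m + 1) := by
  refine ⟨fun s t hs hsm ht htm hst => ?_, fun t ht htm => ?_⟩
  · by_cases hs' : s ≤ m <;> by_cases ht' : t ≤ m <;> simp only [hs', ht', if_true,
      if_false] at hst
    · exact hP.1 s t hs hs' ht ht' hst
    · exact absurd ⟨s, hs, hs', hst⟩ hu
    · exact absurd ⟨t, ht, ht', hst.symm⟩ hu
    · omega
  · by_cases htm' : t < m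
    · simpa [htm'.le, Nat.succ_le_of_lt htm'] using hP.2 t ht htm'
    · simpa [show t = m by omega] using hadj

variable {D : Set V} {u : V}

theorem mem_pathVerts_of_adj_last (hP : IsIndexedPath G x m) (hm : 1 ≤ m) (hx1 : x 1 ∈ D)
    (hmax : ∀ (y : ℕ → V) (m' : ℕ), IsIndexedPath G y m' → y 1 ∈ D → y m' ∈ D → m' ≤ m)
    (hu : u ∈ D) (hadj : G.Adj (x m) u) : u ∈ pathVerts x m := by
  by_contra hnot
  have := hmax _ _ (hP.concat hnot hadj) (by simpa [hm] using hx1) (by simpa using hu)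
  omega

theorem mem_pathVerts_of_adj_first (hP : IsIndexedPath G x m) (hm : 1 ≤ m) (hxm : x m ∈ D)
    (hmax : ∀ (y : ℕ → V) (m' : ℕ), IsIndexedPath G y m' → y 1 ∈ D → y m' ∈ D → m' ≤ m)
    (hu : u ∈ D) (hadj : G.Adj (x 1) u) : u ∈ pathVerts x m := by
  rw [← pathVerts_reverse]
  exact hP.reverse.mem_pathVerts_of_adj_last hm (by simpa using hxm) hmax hu
    (by simpa [show m + 1 - m = 1 by omega] using hadj)

end IsIndexedPath

section Neighbours

variable {G : SimpleGraph V} {x : ℕ → V} {m : ℕ}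

theorem mem_pathNbrIndices {v : V} {t : ℕ} :
    t ∈ pathNbrIndices G x m v ↔ 1 ≤ t ∧ t ≤ m ∧ G.Adj v (x t) := by
  simp [pathNbrIndices, and_assoc]

theorem succ_le_card_pathNbrIndices {α : ℕ} {v : V} (hv : v ∈ disint G α)
    (hon : ∀ u ∈ disint G α, G.Adj v u → u ∈ pathVerts x m) :
    α + 1 ≤ (pathNbrIndices G x m v).card := by
  classical
  obtain ⟨S, hS, hvS⟩ := hv
  have hsub : {u | u ∈ S ∧ G.Adj v u} ⊆ ((pathNbrIndices G x m v).image x : Set V) := by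
    rintro u ⟨huS, hadj⟩
    obtain ⟨t, ht, htm, rfl⟩ := hon u ⟨S, hS, huS⟩ hadj
    exact mem_image_of_mem x (mem_pathNbrIndices.2 ⟨ht, htm, hadj⟩)
  calc α + 1 ≤ {u | u ∈ S ∧ G.Adj v u}.ncard := hS v hvS
    _ ≤ ((pathNbrIndices G x m v).image x : Set V).ncard :=
      Set.ncard_le_ncard hsub (finite_toSet _)
    _ = ((pathNbrIndices G x m v).image x).card := Set.ncard_coe_finset _
    _ ≤ (pathNbrIndices G x m v).card := card_image_le

end Neighbours

section CrossingPairs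

variable {G : SimpleGraph V} {x : ℕ → V} {m : ℕ}

theorem CrossPair.exists_minCrossPair {i j : ℕ} (hc : CrossPair G x m i j) :
    ∃ i' j', MinCrossPair G x m i' j' := by
  by_cases hmin : ∀ h, i < h → h < j → ¬G.Adj (x 1) (x h) ∧ ¬G.Adj (x m) (x h)
  · exact ⟨i, j, hc, hmin⟩
  push Not at hmin
  obtain ⟨h, hih, hhj, hadj⟩ := hmin
  by_cases h1 : G.Adj (x 1) (x h)
  · exact CrossPair.exists_minCrossPair (i := i) (j := h)
      ⟨hc.1, hih, by have := hc.2.2.1; omega, hc.2.2.2.1, h1⟩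
  · exact CrossPair.exists_minCrossPair (i := h) (j := j)
      ⟨by have := hc.1; omega, hhj, hc.2.2.1, hadj h1, hc.2.2.2.2⟩
termination_by j - i

variable {k i j : ℕ}

theorem MinCrossPair.gap_eq_and_cover (h : MinCrossPair G x m i j) (hP : IsIndexedPath G x m)
    (hcyc : NoCycleGE G k) (hk : 3 ≤ k) (hkm : k ≤ m)
    (hdeg : k ≤ (pathNbrIndices G x m (x 1)).card + (pathNbrIndices G x m (x m)).card + 1) :
    j - i - 1 = m - k + 1 ∧
      (pathNbrIndices G x m (x 1)).image (· - 1) ∪ pathNbrIndices G x m (x m) ∪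
        Ioo i (j - 1) = Icc 1 (m - 1) := by
  set A := pathNbrIndices G x m (x 1)
  set B := pathNbrIndices G x m (x m)
  obtain ⟨⟨hi, hij, hjm, hmi, h1j⟩, hmin⟩ := h
  have hA : A ⊆ Icc 2 m := fun t ht => by
    obtain ⟨ht1, htm, hadj⟩ := mem_pathNbrIndices.1 ht
    have : t ≠ 1 := by rintro rfl; exact hadj.ne rfl
    exact mem_Icc.2 ⟨by omega, htm⟩
  have hB : B ⊆ Icc 1 (m - 1) := fun t ht => by
    obtain ⟨ht1, htm, hadj⟩ := mem_pathNbrIndices.1 ht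
    have : t ≠ m := by rintro rfl; exact hadj.ne rfl
    exact mem_Icc.2 ⟨ht1, by omega⟩
  have hAB : ∀ t ∈ B, t + 1 ∉ A := fun t htB htA => by
    obtain ⟨ht1, -, hmt⟩ := mem_pathNbrIndices.1 htB
    obtain ⟨-, htm, h1t⟩ := mem_pathNbrIndices.1 htA
    have := hP.sub_lt_of_crossPair hcyc hk ⟨ht1, t.lt_succ_self, htm, hmt, h1t⟩
    omega
  have hgap : ∀ h, i < h → h < j → h ∉ A ∧ h ∉ B := fun h hih hhj =>
    ⟨fun hA => (hmin h hih hhj).1 (mem_pathNbrIndices.1 hA).2.2,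
      fun hB => (hmin h hih hhj).2 (mem_pathNbrIndices.1 hB).2.2⟩
  have hsub := image_pred_union_union_Ioo_subset (i := i) hA hB hjm
  have hcard := card_image_pred_union_union_Ioo (fun h0 => by simpa using hA h0) hAB hgap
  have hlong := hP.sub_lt_of_crossPair hcyc hk ⟨hi, hij, hjm, hmi, h1j⟩
  have hij' : i + 1 < j := by
    by_contra
    exact hAB i (mem_pathNbrIndices.2 ⟨hi, by omega, hmi⟩)
      (mem_pathNbrIndices.2 ⟨by omega, by omega, by rwa [show i + 1 = j by omega]⟩)
  have hshort := card_le_card hsub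
  rw [hcard, Nat.card_Icc] at hshort
  refine ⟨by omega, eq_of_subset_of_card_le hsub ?_⟩
  rw [hcard, Nat.card_Icc]
  omega

theorem MinCrossPair.le_fst_of_cover {i' j' : ℕ} (h : MinCrossPair G x m i j) (hgap : i + 3 ≤ j)
    (hcover : (pathNbrIndices G x m (x 1)).image (· - 1) ∪ pathNbrIndices G x m (x m) ∪
        Ioo i' (j' - 1) = Icc 1 (m - 1)) :
    i' ≤ i := by
  obtain ⟨⟨hi, -, hjm, -, -⟩, hmin⟩ := h
  have hmem : i + 1 ∈ Icc 1 (m - 1) := mem_Icc.2 ⟨by omega, by omega⟩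
  rw [← hcover] at hmem
  simp only [mem_union, mem_image, mem_Ioo] at hmem
  rcases hmem with (⟨a, ha, hai⟩ | hB) | hinterior
  · have := (mem_pathNbrIndices.1 ha).2.2
    exact absurd (show a = i + 2 by omega ▸ this) (hmin (i + 2) (by omega) (by omega)).1
  · exact absurd (mem_pathNbrIndices.1 hB).2.2 (hmin (i + 1) (by omega) (by omega)).2
  · omega

end CrossingPairs

theorem stmt_8_general (k ℓ : ℕ) (hk : 5 ≤ k) (hodd : Odd k) (hℓ : ℓ = (k - 1) / 2)
    {V : Type*} (G : SimpleGraph V)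
    (hcyc : NoCycleGE G k) (D : Set V) (hD : D = disint G (ℓ - 1))
    (x : ℕ → V) (m : ℕ) (hP : IsIndexedPath G x m) (hx1 : x 1 ∈ D) (hxm : x m ∈ D)
    (hmax : ∀ (y : ℕ → V) (m' : ℕ), IsIndexedPath G y m' → y 1 ∈ D → y m' ∈ D → m' ≤ m)
    (hmk : k ≤ m) (hcross : ∃ i j, CrossPair G x m i j) :
    (k + 1 ≤ m →
      (∃ i j, MinCrossPair G x m i j) ∧
      (∀ i j i' j', MinCrossPair G x m i j → MinCrossPair G x m i' j' →
        i = i' ∧ j = j') ∧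
      (∀ i j, MinCrossPair G x m i j → j - i - 1 = m - k + 1)) ∧
    (m = k → ∀ i j, MinCrossPair G x m i j → j - i - 1 = 1) := by
  obtain ⟨r, rfl⟩ := hodd
  subst hD
  have hA := succ_le_card_pathNbrIndices hx1 fun u hu => hP.mem_pathVerts_of_adj_first
    (by omega) hxm hmax hu
  have hB := succ_le_card_pathNbrIndices hxm fun u hu => hP.mem_pathVerts_of_adj_last
    (by omega) hx1 hmax hu
  have hpair : ∀ i j, MinCrossPair G x m i j → _ := fun i j h =>
    h.gap_eq_and_cover hP hcyc (by omega) hmk (by omega)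
  refine ⟨fun hm => ⟨?_, fun i j i' j' h h' => ?_, fun i j h => (hpair i j h).1⟩,
    fun hm i j h => by have := (hpair i j h).1; omega⟩
  · obtain ⟨i, j, hc⟩ := hcross
    exact hc.exists_minCrossPair
  · obtain ⟨hlen₁, hcover₁⟩ := hpair i j h
    obtain ⟨hlen₂, hcover₂⟩ := hpair i' j' h'
    have hlt₁ := h.1.2.1
    have hlt₂ := h'.1.2.1
    have hii' : i = i' :=
      le_antisymm (h'.le_fst_of_cover (by omega) hcover₁) (h.le_fst_of_cover (by omega) hcover₂)
    omega

/-- Uniqueness and length of minimal crossing pairs for odd `k` (Claim 3.6). -/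
theorem stmt_8 (k ℓ : ℕ) (hk : 5 ≤ k) (hodd : Odd k) (hℓ : ℓ = (k - 1) / 2)
    {V : Type*} [Fintype V] (G : SimpleGraph V) (h2c : TwoConnected G)
    (hcyc : NoCycleGE G k) (D : Set V) (hD : D = disint G (ℓ - 1)) (hne : D.Nonempty)
    (x : ℕ → V) (m : ℕ) (hP : IsIndexedPath G x m) (hx1 : x 1 ∈ D) (hxm : x m ∈ D)
    (hmax : ∀ (y : ℕ → V) (m' : ℕ), IsIndexedPath G y m' → y 1 ∈ D → y m' ∈ D → m' ≤ m)
    (hmk : k ≤ m) (hcross : ∃ i j, CrossPair G x m i j) :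
    (k + 1 ≤ m →
      (∃ i j, MinCrossPair G x m i j) ∧
      (∀ i j i' j', MinCrossPair G x m i j → MinCrossPair G x m i' j' →
        i = i' ∧ j = j') ∧
      (∀ i j, MinCrossPair G x m i j → j - i - 1 = m - k + 1)) ∧
    (m = k → ∀ i j, MinCrossPair G x m i j → j - i - 1 = 1) :=
  stmt_8_general k ℓ hk hodd hℓ G hcyc D hD x m hP hx1 hxm hmax hmk hcross
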